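/- Let A₀ be a Hurwitz stable Metzler matrix, E ∈ ℝ^{n×q}_{≥0}, C ∈ ℝ^{q×n}_{≥0}, F ∈ ℝ^{q×q}_{≥0}, and define G = −CA₀^{-1}E + F. Then there exist λ ∈ ℝ^n_{>0} and diagonal D ≻ 0 such that A₀λ + ED𝟙 < 0 and Cλ + (F − I)D𝟙 < 0 componentwise, if and only if ρ(G) < 1. -/

import Mathlib

open Matrix

def IsMetzler {n : ℕ} (A : Matrix (Fin n) (Fin n) ℝ) : Prop :=
  ∀ i j : Fin n, i ≠ j → 0 ≤ A i j

def IsHurwitz {n : ℕ} (A : Matrix (Fin n) (Fin n) ℝ) : Prop :=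
  ∀ μ ∈ spectrum ℂ (A.map (fun x => (x : ℂ))), μ.re < 0

noncomputable def specRad {n : ℕ} (M : Matrix (Fin n) (Fin n) ℝ) : ℝ :=
  (spectralRadius ℂ (M.map (fun x => (x : ℂ)))).toReal

noncomputable section SGHelpers
open Filter

attribute [local instance] Matrix.linftyOpNormedAddCommGroup Matrix.linftyOpNormedRing
  Matrix.linftyOpNormedAlgebra Matrix.linfty_opNormOneClass

variable {m : ℕ}

instance : CompleteSpace (Matrix (Fin m) (Fin m) ℂ) := FiniteDimensional.complete ℂ _

abbrev mc (B : Matrix (Fin m) (Fin m) ℝ) : Matrix (Fin m) (Fin m) ℂ :=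
  B.map (fun x => (x : ℂ))

lemma mc_apply (B : Matrix (Fin m) (Fin m) ℝ) (i j) : mc B i j = (B i j : ℂ) := rfl

lemma mc_mul (A B : Matrix (Fin m) (Fin m) ℝ) : mc (A * B) = mc A * mc B :=
  Matrix.map_mul (f := Complex.ofRealHom)

lemma mc_one : mc (1 : Matrix (Fin m) (Fin m) ℝ) = 1 :=
  Matrix.map_one _ (by simp) (by simp)

lemma mc_pow (B : Matrix (Fin m) (Fin m) ℝ) (k : ℕ) : mc (B ^ k) = mc B ^ k := by
  induction k with
  | zero => simpa using mc_one
  | succ k ih => rw [pow_succ, pow_succ, mc_mul, ih]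

lemma mc_smul_one_sub (B : Matrix (Fin m) (Fin m) ℝ) (t : ℝ) :
    mc (t • (1 : Matrix (Fin m) (Fin m) ℝ) - B) = (t : ℂ) • 1 - mc B := by
  ext i j
  simp only [mc_apply, Matrix.sub_apply, Matrix.smul_apply, Matrix.one_apply, smul_eq_mul]
  push_cast
  split <;> simp

lemma entry_norm_le (M : Matrix (Fin m) (Fin m) ℂ) (i j) : ‖M i j‖ ≤ ‖M‖ := by
  have h1 : ‖M i j‖₊ ≤ ∑ l, ‖M i l‖₊ :=
    Finset.single_le_sum (f := fun l => ‖M i l‖₊) (fun _ _ => zero_le) (Finset.mem_univ j)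
  have h2 : (∑ l, ‖M i l‖₊) ≤ ‖M‖₊ := by
    rw [Matrix.linfty_opNNNorm_def]
    exact Finset.le_sup (f := fun i => ∑ l, ‖M i l‖₊) (Finset.mem_univ i)
  exact_mod_cast h1.trans h2

lemma norm_matrix_le (M : Matrix (Fin m) (Fin m) ℂ) (c : ℝ) (hc : 0 ≤ c)
    (h : ∀ i j, ‖M i j‖ ≤ c) : ‖M‖ ≤ m * c := by
  rw [Matrix.linfty_opNorm_def]
  have key : (Finset.univ : Finset (Fin m)).sup (fun i => ∑ j, ‖M i j‖₊) ≤ c.toNNReal * m := by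
    apply Finset.sup_le
    intro i _
    calc ∑ j, ‖M i j‖₊ ≤ ∑ _j : Fin m, c.toNNReal :=
          Finset.sum_le_sum fun j _ => by
            simpa [← NNReal.coe_le_coe, Real.coe_toNNReal _ hc] using h i j
      _ = c.toNNReal * m := by simp [Finset.sum_const, mul_comm]
  calc ((Finset.univ.sup fun i => ∑ j, ‖M i j‖₊ : NNReal) : ℝ)
      ≤ ((c.toNNReal * m : NNReal) : ℝ) := by exact_mod_cast key
    _ = m * c := by
        rw [NNReal.coe_mul, Real.coe_toNNReal _ hc]
        push_cast
        ring

lemma spectrum_empty_of_isEmpty [IsEmpty (Fin m)] (M : Matrix (Fin m) (Fin m) ℂ) :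
    spectrum ℂ M = ∅ := by
  ext z
  simp only [Set.mem_empty_iff_false, iff_false]
  intro hz
  exact (spectrum.mem_iff.mp hz) (by
    have : (algebraMap ℂ (Matrix (Fin m) (Fin m) ℂ) z - M) = 1 := Subsingleton.elim _ _
    rw [this]; exact isUnit_one)

lemma specRad_of_isEmpty [IsEmpty (Fin m)] (B : Matrix (Fin m) (Fin m) ℝ) :
    specRad B = 0 := by
  rw [specRad, spectralRadius, spectrum_empty_of_isEmpty]
  simp

lemma spectralRadius_ne_top (B : Matrix (Fin m) (Fin m) ℝ) :
    spectralRadius ℂ (mc B) ≠ ⊤ := by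
  rcases isEmpty_or_nonempty (Fin m) with h | h
  · rw [spectralRadius, spectrum_empty_of_isEmpty]
    simp
  · exact ne_top_of_le_ne_top ENNReal.coe_ne_top (spectrum.spectralRadius_le_nnnorm (mc B))

lemma specRad_nonneg (B : Matrix (Fin m) (Fin m) ℝ) : 0 ≤ specRad B :=
  ENNReal.toReal_nonneg

lemma norm_le_specRad {B : Matrix (Fin m) (Fin m) ℝ} {μ : ℂ}
    (hμ : μ ∈ spectrum ℂ (mc B)) : ‖μ‖ ≤ specRad B := by
  have h1 : (‖μ‖₊ : ENNReal) ≤ spectralRadius ℂ (mc B) :=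
    le_iSup₂ (f := fun k (_ : k ∈ spectrum ℂ (mc B)) => (‖k‖₊ : ENNReal)) μ hμ
  have := ENNReal.toReal_mono (spectralRadius_ne_top B) h1
  simpa [specRad] using this

lemma exists_decay (B : Matrix (Fin m) (Fin m) ℝ) {r : ℝ} (hr : specRad B < r) :
    ∃ c : ℝ, 0 < c ∧ ∀ (k : ℕ) i j, |(B ^ k) i j| ≤ c * r ^ k := by
  have hr0 : 0 < r := lt_of_le_of_lt (specRad_nonneg B) hr
  have hlt : spectralRadius ℂ (mc B) < ENNReal.ofReal r := by
    rw [← ENNReal.ofReal_toReal (spectralRadius_ne_top B)]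
    exact (ENNReal.ofReal_lt_ofReal_iff hr0).mpr hr
  have hev : ∀ᶠ k : ℕ in atTop, (‖(mc B) ^ k‖₊ : ENNReal) ^ (1 / (k : ℝ)) < ENNReal.ofReal r :=
    (spectrum.pow_nnnorm_pow_one_div_tendsto_nhds_spectralRadius (mc B)).eventually_lt_const hlt
  obtain ⟨K, hK⟩ := eventually_atTop.mp hev
  have key : ∀ k : ℕ, K ≤ k → 1 ≤ k → ‖(mc B) ^ k‖ ≤ r ^ k := by
    intro k hKk h1k
    have h := (hK k hKk).le
    have hk0 : (k : ℝ) ≠ 0 := by positivity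
    have h2 := ENNReal.rpow_le_rpow h (by positivity : (0:ℝ) ≤ (k : ℝ))
    rw [← ENNReal.rpow_mul, one_div, inv_mul_cancel₀ hk0, ENNReal.rpow_one,
      ENNReal.ofReal_rpow_of_pos hr0, Real.rpow_natCast] at h2
    exact (ENNReal.ofReal_le_ofReal_iff (by positivity)).mp
      (by rwa [← coe_nnnorm, ENNReal.ofReal_coe_nnreal])
  set c : ℝ := 1 + ∑ k ∈ Finset.range (K + 1), ‖(mc B) ^ k‖ / r ^ k with hc
  have hterm : ∀ k ∈ Finset.range (K + 1), (0:ℝ) ≤ ‖(mc B) ^ k‖ / r ^ k := by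
    intro k _; positivity
  have hcpos : 0 < c := by
    have := Finset.sum_nonneg hterm
    rw [hc]; linarith
  refine ⟨c, hcpos, fun k i j => ?_⟩
  have hentry : |(B ^ k) i j| ≤ ‖(mc B) ^ k‖ := by
    have : |(B ^ k) i j| = ‖(mc (B ^ k)) i j‖ := by
      simp [Matrix.map_apply, Complex.norm_real]
    rw [this, mc_pow]
    exact entry_norm_le _ i j
  rcases le_or_gt k K with hk | hk
  · have hmem : k ∈ Finset.range (K + 1) := Finset.mem_range.mpr (by omega)
    have h1 : ‖(mc B) ^ k‖ / r ^ k ≤ c := by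
      have := Finset.single_le_sum hterm hmem
      rw [hc]; linarith
    have := (div_le_iff₀ (by positivity : (0:ℝ) < r ^ k)).mp h1
    linarith [hentry]
  · have h1 : ‖(mc B) ^ k‖ ≤ r ^ k := key k (by omega) (by omega)
    have h2 : (1:ℝ) * r ^ k ≤ c * r ^ k := by
      have hsum := Finset.sum_nonneg hterm
      have : (1:ℝ) ≤ c := by rw [hc]; linarith
      exact mul_le_mul_of_nonneg_right this (by positivity)
    calc |(B ^ k) i j| ≤ r ^ k := hentry.trans h1
      _ = 1 * r ^ k := (one_mul _).symm
      _ ≤ c * r ^ k := h2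

lemma telescope {𝕜 : Type*} [RCLike 𝕜] {m : ℕ} (M : Matrix (Fin m) (Fin m) 𝕜) (z : 𝕜)
    (hz : z ≠ 0)
    (hsum : ∀ i j, Summable fun k : ℕ => (M ^ k) i j / z ^ (k + 1)) :
    (z • (1 : Matrix (Fin m) (Fin m) 𝕜) - M) *
      (Matrix.of fun i j => ∑' k : ℕ, (M ^ k) i j / z ^ (k + 1)) = 1 := by
  set S : Matrix (Fin m) (Fin m) 𝕜 := Matrix.of fun i j => ∑' k : ℕ, (M ^ k) i j / z ^ (k + 1)
    with hS
  rw [Matrix.sub_mul, Matrix.smul_mul, Matrix.one_mul]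
  ext i j
  have hg : ∀ l, Summable fun k : ℕ => M i l * ((M ^ k) l j / z ^ (k + 1)) :=
    fun l => (hsum l j).mul_left _
  have hMS : (M * S) i j = ∑' k : ℕ, (M ^ (k + 1)) i j / z ^ (k + 1) := by
    rw [Matrix.mul_apply]
    have h1 : ∀ l, M i l * S l j = ∑' k : ℕ, M i l * ((M ^ k) l j / z ^ (k + 1)) := by
      intro l
      rw [hS, Matrix.of_apply, tsum_mul_left]
    calc (∑ l, M i l * S l j)
        = ∑ l, ∑' k : ℕ, M i l * ((M ^ k) l j / z ^ (k + 1)) := by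
          exact Finset.sum_congr rfl fun l _ => h1 l
      _ = ∑' k : ℕ, ∑ l, M i l * ((M ^ k) l j / z ^ (k + 1)) :=
          (Summable.tsum_finsetSum (fun l _ => hg l)).symm
      _ = ∑' k : ℕ, (M ^ (k + 1)) i j / z ^ (k + 1) := by
          refine tsum_congr fun k => ?_
          simp_rw [← mul_div_assoc]
          rw [← Finset.sum_div]
          congr 1
          rw [pow_succ', Matrix.mul_apply]
  have hzS : (z • S) i j = ∑' k : ℕ, (M ^ k) i j / z ^ k := by
    rw [Matrix.smul_apply, hS, Matrix.of_apply, smul_eq_mul, ← tsum_mul_left]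
    refine tsum_congr fun k => ?_
    rw [pow_succ]
    field_simp
  have hgsum : Summable fun k : ℕ => (M ^ k) i j / z ^ k := by
    refine ((hsum i j).mul_right z).congr fun k => ?_
    rw [pow_succ]
    field_simp
  have htel : (∑' k : ℕ, (M ^ k) i j / z ^ k) - (∑' k : ℕ, (M ^ (k+1)) i j / z ^ (k+1))
      = (1 : Matrix (Fin m) (Fin m) 𝕜) i j := by
    rw [Summable.tsum_eq_zero_add hgsum]
    simp [Matrix.one_apply]
  rw [Matrix.sub_apply, hMS, hzS, htel]

lemma pow_entry_nonneg {B : Matrix (Fin m) (Fin m) ℝ} (hB : ∀ i j, 0 ≤ B i j) (k : ℕ) :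
    ∀ i j, 0 ≤ (B ^ k) i j := by
  induction k with
  | zero => intro i j; rw [pow_zero]; by_cases h : i = j <;> simp [Matrix.one_apply, h]
  | succ k ih =>
      intro i j
      rw [pow_succ, Matrix.mul_apply]
      exact Finset.sum_nonneg fun l _ => mul_nonneg (ih i l) (hB l j)

lemma summable_entries (B : Matrix (Fin m) (Fin m) ℝ) (hB : ∀ i j, 0 ≤ B i j) {s : ℝ}
    (hs : specRad B < s) (i j : Fin m) :
    Summable fun k : ℕ => (B ^ k) i j / s ^ (k + 1) := by
  have hs0 : 0 < s := lt_of_le_of_lt (specRad_nonneg B) hs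
  set r : ℝ := (specRad B + s) / 2 with hr
  have hr1 : specRad B < r := by rw [hr]; linarith
  have hr2 : r < s := by rw [hr]; linarith
  have hr0 : 0 < r := lt_of_le_of_lt (specRad_nonneg B) hr1
  obtain ⟨c, hc, hdecay⟩ := exists_decay B hr1
  have hgeo : Summable fun k : ℕ => (c / s) * (r / s) ^ k :=
    (summable_geometric_of_lt_one (by positivity) ((div_lt_one hs0).mpr hr2)).mul_left _
  refine Summable.of_nonneg_of_le
    (fun k => div_nonneg (pow_entry_nonneg hB k i j) (by positivity)) (fun k => ?_) hgeo
  have h2 : (B ^ k) i j ≤ c * r ^ k := (abs_le.mp (hdecay k i j)).2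
  have hrhs : (c / s) * (r / s) ^ k = (c * r ^ k) / s ^ (k + 1) := by
    rw [div_pow, pow_succ]
    field_simp
  rw [hrhs]
  gcongr
lemma neumann (B : Matrix (Fin m) (Fin m) ℝ) (hB : ∀ i j, 0 ≤ B i j) {s : ℝ}
    (hs : specRad B < s) :
    ∃ S : Matrix (Fin m) (Fin m) ℝ,
      (∀ i j, S i j = ∑' k : ℕ, (B ^ k) i j / s ^ (k + 1)) ∧
      (∀ i j, 0 ≤ S i j) ∧ (∀ i, 1 / s ≤ S i i) ∧
      (s • (1 : Matrix (Fin m) (Fin m) ℝ) - B) * S = 1 ∧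
      S * (s • (1 : Matrix (Fin m) (Fin m) ℝ) - B) = 1 := by
  have hs0 : 0 < s := lt_of_le_of_lt (specRad_nonneg B) hs
  have hsum := summable_entries B hB hs
  have h1 : (s • (1 : Matrix (Fin m) (Fin m) ℝ) - B) *
      (Matrix.of fun i j => ∑' k : ℕ, (B ^ k) i j / s ^ (k + 1)) = 1 :=
    telescope B s (ne_of_gt hs0) hsum
  refine ⟨_, fun i j => rfl, ?_, ?_, h1, mul_eq_one_comm.mp h1⟩
  · intro i j
    exact tsum_nonneg fun k => div_nonneg (pow_entry_nonneg hB k i j) (by positivity)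
  · intro i
    have h2 := Summable.le_tsum (hsum i i) 0
      (fun k _ => div_nonneg (pow_entry_nonneg hB k i i) (by positivity))
    simpa [Matrix.one_apply] using h2

lemma one_add_small_inv [Nonempty (Fin m)] (x : Matrix (Fin m) (Fin m) ℂ) (hx : ‖x‖ ≤ 1/2) :
    ∃ y : Matrix (Fin m) (Fin m) ℂ, (1 + x) * y = 1 ∧ y * (1 + x) = 1 ∧ ‖y‖ ≤ 2 := by
  have hx1 : ‖-x‖ < 1 := by rw [norm_neg]; linarith
  set u := Units.oneSub (-x) hx1 with hudef
  have hu : (u : Matrix (Fin m) (Fin m) ℂ) = 1 + x := by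
    rw [hudef, Units.val_oneSub, sub_neg_eq_add]
  set w : Matrix (Fin m) (Fin m) ℂ := ↑u⁻¹ with hwdef
  refine ⟨w, ?_, ?_, ?_⟩
  · rw [← hu, hwdef]; exact u.mul_inv
  · rw [← hu, hwdef]; exact u.inv_mul
  · have hmi : (1 + x) * w = 1 := by rw [← hu, hwdef]; exact u.mul_inv
    have h2 : w + x * w = 1 := by rw [← hmi, add_mul, one_mul]
    have he : w = 1 - x * w := eq_sub_of_add_eq h2
    have hnorm : ‖w‖ ≤ 1 + (1/2) * ‖w‖ := by
      calc ‖w‖ = ‖(1 : Matrix (Fin m) (Fin m) ℂ) - x * w‖ := by rw [← he]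
        _ ≤ ‖(1 : Matrix (Fin m) (Fin m) ℂ)‖ + ‖x * w‖ := norm_sub_le _ _
        _ ≤ 1 + ‖x‖ * ‖w‖ := by
            rw [norm_one]
            exact add_le_add le_rfl (norm_mul_le _ _)
        _ ≤ 1 + (1/2) * ‖w‖ :=
            add_le_add le_rfl (mul_le_mul_of_nonneg_right hx (norm_nonneg _))
    linarith

lemma perron [Nonempty (Fin m)] (B : Matrix (Fin m) (Fin m) ℝ) (hB : ∀ i j, 0 ≤ B i j) :
    ((specRad B : ℝ) : ℂ) ∈ spectrum ℂ (mc B) := by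
  by_contra hρ
  set ρ := specRad B with hρdef
  obtain ⟨μ₀, hμ₀⟩ := spectrum.nonempty (mc B)
  obtain ⟨μ, hμmem, hμmax⟩ := (spectrum.isCompact (mc B)).exists_isMaxOn ⟨μ₀, hμ₀⟩
    continuous_norm.continuousOn
  have hle : ‖μ‖ ≤ ρ := norm_le_specRad hμmem
  have hge : ρ ≤ ‖μ‖ := by
    have h1 : spectralRadius ℂ (mc B) ≤ (‖μ‖₊ : ENNReal) := by
      refine iSup₂_le fun k hk => ?_
      have : ‖k‖ ≤ ‖μ‖ := hμmax hk
      exact_mod_cast this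
    have h2 := ENNReal.toReal_mono ENNReal.coe_ne_top h1
    simpa [hρdef, specRad] using h2
  have hnorm : ‖μ‖ = ρ := le_antisymm hle hge
  have hρpos : 0 < ρ := by
    rcases (specRad_nonneg B).lt_or_eq with h | h
    · exact h
    · exfalso
      apply hρ
      have hρ0 : ρ = 0 := by rw [hρdef, ← h]
      have hμ0 : μ = 0 := norm_eq_zero.mp (by rw [hnorm, hρ0])
      rw [hρ0, Complex.ofReal_zero, ← hμ0]
      exact hμmem
  have hUnit : IsUnit ((ρ:ℂ) • (1 : Matrix (Fin m) (Fin m) ℂ) - mc B) := by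
    have h := spectrum.notMem_iff.mp hρ
    rwa [Algebra.algebraMap_eq_smul_one] at h
  obtain ⟨u, hu⟩ := hUnit
  set V : Matrix (Fin m) (Fin m) ℂ := ↑u⁻¹ with hVdef
  have hV1 : ((ρ:ℂ) • 1 - mc B) * V = 1 := by rw [← hu]; exact u.mul_inv
  have hV2 : V * ((ρ:ℂ) • 1 - mc B) = 1 := by rw [← hu]; exact u.inv_mul
  set Kv := ‖V‖ with hKvdef
  have hKv0 : 0 ≤ Kv := norm_nonneg _
  set ε : ℝ := min (1 / (2 * (Kv + 1))) (1 / (2 * (m + 1) * (2 * Kv + 1))) with hεdef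
  have hεpos : 0 < ε := lt_min (by positivity) (by positivity)
  set t := ρ + ε with htdef
  have htρ : ρ < t := by rw [htdef]; linarith
  have htpos : 0 < t := lt_trans hρpos htρ
  obtain ⟨S, hSapp, hSnn, hSdiag, hSl, hSr⟩ := neumann B hB (htρ : specRad B < t)
  have hεKv : ε * Kv ≤ 1/2 := by
    have h1 : ε ≤ 1 / (2*(Kv+1)) := min_le_left _ _
    calc ε * Kv ≤ (1/(2*(Kv+1))) * Kv := mul_le_mul_of_nonneg_right h1 hKv0
      _ ≤ 1/2 := by
          rw [div_mul_eq_mul_div, div_le_div_iff₀ (by positivity) (by norm_num)]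
          nlinarith
  set x : Matrix (Fin m) (Fin m) ℂ := ((ε:ℝ):ℂ) • V with hxdef
  have hxnorm : ‖x‖ ≤ 1/2 := by
    rw [hxdef, norm_smul, Complex.norm_real, Real.norm_eq_abs, abs_of_pos hεpos]
    exact hεKv
  obtain ⟨y, hy1, hy2, hynorm⟩ := one_add_small_inv x hxnorm
  have hfact : ((t:ℝ):ℂ) • (1 : Matrix (Fin m) (Fin m) ℂ) - mc B
      = (((ρ:ℝ):ℂ) • 1 - mc B) * (1 + x) := by
    rw [Matrix.mul_add, Matrix.mul_one, hxdef, Matrix.mul_smul, hV1, htdef]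
    push_cast
    rw [add_smul]
    abel
  have hmcSl : ((((t:ℝ)):ℂ) • (1 : Matrix (Fin m) (Fin m) ℂ) - mc B) * mc S = 1 := by
    rw [← mc_smul_one_sub, ← mc_mul, hSl, mc_one]
  have hleft : (y * V) * ((((t:ℝ)):ℂ) • (1 : Matrix (Fin m) (Fin m) ℂ) - mc B) = 1 := by
    rw [hfact]
    calc (y * V) * ((((ρ:ℝ):ℂ) • 1 - mc B) * (1 + x))
        = y * (V * (((ρ:ℝ):ℂ) • 1 - mc B) * (1 + x)) := by
          rw [Matrix.mul_assoc, Matrix.mul_assoc]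
      _ = y * (1 + x) := by rw [hV2, Matrix.one_mul]
      _ = 1 := hy2
  have hmcS : mc S = y * V := by
    calc mc S = 1 * mc S := (Matrix.one_mul _).symm
      _ = ((y * V) * ((((t:ℝ)):ℂ) • 1 - mc B)) * mc S := by rw [hleft]
      _ = (y * V) * (((((t:ℝ)):ℂ) • 1 - mc B) * mc S) := Matrix.mul_assoc _ _ _
      _ = y * V := by rw [hmcSl, Matrix.mul_one]
  have hSbound : ∀ i j, S i j ≤ 2 * Kv := by
    intro i j
    calc S i j ≤ ‖(mc S) i j‖ := by
          rw [mc_apply, Complex.norm_real, Real.norm_eq_abs]; exact le_abs_self _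
      _ ≤ ‖mc S‖ := entry_norm_le _ _ _
      _ = ‖y * V‖ := by rw [hmcS]
      _ ≤ ‖y‖ * ‖V‖ := norm_mul_le _ _
      _ ≤ 2 * Kv := mul_le_mul_of_nonneg_right hynorm hKv0
  set z : ℂ := ((t/ρ : ℝ):ℂ) * μ with hzdef
  have hznorm : ‖z‖ = t := by
    rw [hzdef, norm_mul, Complex.norm_real, Real.norm_eq_abs,
      abs_of_pos (div_pos htpos hρpos), hnorm]
    field_simp
  have hzne : z ≠ 0 := by
    intro h
    rw [h, norm_zero] at hznorm
    linarith
  have hnormfun : ∀ i j, (fun k : ℕ => ‖(mc B ^ k) i j / z ^ (k+1)‖)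
      = fun k : ℕ => (B ^ k) i j / t ^ (k+1) := by
    intro i j
    funext k
    rw [norm_div, norm_pow, hznorm, ← mc_pow, mc_apply, Complex.norm_real, Real.norm_eq_abs,
      abs_of_nonneg (pow_entry_nonneg hB k i j)]
  have hcsum : ∀ i j, Summable fun k : ℕ => (mc B ^ k) i j / z ^ (k+1) := by
    intro i j
    apply Summable.of_norm
    rw [hnormfun i j]
    exact summable_entries B hB htρ i j
  set T : Matrix (Fin m) (Fin m) ℂ :=
    Matrix.of fun i j => ∑' k : ℕ, (mc B ^ k) i j / z ^ (k+1) with hTdef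
  have hTl : (z • 1 - mc B) * T = 1 := telescope (mc B) z hzne hcsum
  have hTr : T * (z • 1 - mc B) = 1 := mul_eq_one_comm.mp hTl
  have hTentry : ∀ i j, ‖T i j‖ ≤ 2 * Kv := by
    intro i j
    have h1 : ‖T i j‖ ≤ ∑' k : ℕ, ‖(mc B ^ k) i j / z ^ (k+1)‖ := by
      apply norm_tsum_le_tsum_norm
      rw [hnormfun i j]
      exact summable_entries B hB htρ i j
    calc ‖T i j‖ ≤ ∑' k : ℕ, ‖(mc B ^ k) i j / z ^ (k+1)‖ := h1
      _ = ∑' k : ℕ, (B ^ k) i j / t ^ (k+1) := by rw [hnormfun i j]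
      _ = S i j := (hSapp i j).symm
      _ ≤ 2 * Kv := hSbound i j
  have hTnorm : ‖T‖ ≤ m * (2*Kv) := norm_matrix_le T _ (by positivity) hTentry
  have hzμ : ‖z - μ‖ = ε := by
    have h1 : z - μ = (((t/ρ - 1 : ℝ)):ℂ) * μ := by rw [hzdef]; push_cast; ring
    have h2 : (0:ℝ) ≤ t/ρ - 1 := by
      rw [sub_nonneg, le_div_iff₀ hρpos, one_mul]
      exact htρ.le
    rw [h1, norm_mul, Complex.norm_real, Real.norm_eq_abs, abs_of_nonneg h2, hnorm]
    field_simp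
    rw [htdef]
    ring
  have hsmall : ‖(z - μ) • T‖ < 1 := by
    rw [norm_smul, hzμ]
    have h2 : ε ≤ 1/(2*(m+1)*(2*Kv+1)) := min_le_right _ _
    calc ε * ‖T‖ ≤ ε * (m * (2*Kv)) := mul_le_mul_of_nonneg_left hTnorm hεpos.le
      _ ≤ (1/(2*(m+1)*(2*Kv+1))) * (m * (2*Kv)) :=
          mul_le_mul_of_nonneg_right h2 (by positivity)
      _ < 1 := by
          rw [div_mul_eq_mul_div, div_lt_one (by positivity)]
          nlinarith [hKv0, (by positivity : (0:ℝ) ≤ (m:ℝ))]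
  have hfinal : IsUnit (algebraMap ℂ (Matrix (Fin m) (Fin m) ℂ) μ - mc B) := by
    rw [Algebra.algebraMap_eq_smul_one]
    have hid : μ • (1 : Matrix (Fin m) (Fin m) ℂ) - mc B
        = (z • 1 - mc B) * (1 - (z - μ) • T) := by
      rw [Matrix.mul_sub, Matrix.mul_one, Matrix.mul_smul, hTl, sub_smul]
      abel
    rw [hid]
    have hu1 : IsUnit (z • (1 : Matrix (Fin m) (Fin m) ℂ) - mc B) := ⟨⟨_, T, hTl, hTr⟩, rfl⟩
    have hu2 : IsUnit (1 - (z - μ) • T) := (Units.oneSub _ hsmall).isUnit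
    exact hu1.mul hu2
  exact (spectrum.mem_iff.mp hμmem) hfinal
lemma mulVec_apply' {a b : ℕ} (M : Matrix (Fin a) (Fin b) ℝ) (v : Fin b → ℝ) (i : Fin a) :
    M.mulVec v i = ∑ j, M i j * v j := rfl

lemma cmulVec_apply' {a b : ℕ} (M : Matrix (Fin a) (Fin b) ℂ) (v : Fin b → ℂ) (i : Fin a) :
    M.mulVec v i = ∑ j, M i j * v j := rfl

lemma metzler_inv {n : ℕ} (A : Matrix (Fin n) (Fin n) ℝ) (hM : IsMetzler A) (hH : IsHurwitz A) :
    ∃ S : Matrix (Fin n) (Fin n) ℝ, A * (-S) = 1 ∧ (-S) * A = 1 ∧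
      (∀ i j, 0 ≤ S i j) ∧ (∀ i, 0 < ∑ j, S i j) := by
  rcases isEmpty_or_nonempty (Fin n) with hE | hNE
  · exact ⟨0, by ext i j; exact isEmptyElim i, by ext i j; exact isEmptyElim i,
      fun i => isEmptyElim i, fun i => isEmptyElim i⟩
  · set s : ℝ := 1 + ∑ i, |A i i| with hsdef
    have habs : ∀ i : Fin n, |A i i| ≤ ∑ j, |A j j| :=
      fun i => Finset.single_le_sum (f := fun j => |A j j|) (fun j _ => abs_nonneg _) (Finset.mem_univ i)
    have hsum0 : (0:ℝ) ≤ ∑ j, |A j j| := Finset.sum_nonneg fun j _ => abs_nonneg _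
    have hs1 : 0 < s := by rw [hsdef]; linarith
    set B := A + s • (1 : Matrix (Fin n) (Fin n) ℝ) with hBdef
    have hBnn : ∀ i j, 0 ≤ B i j := by
      intro i j
      have hBij : B i j = A i j + s * (if i = j then (1:ℝ) else 0) := by
        rw [hBdef, Matrix.add_apply, Matrix.smul_apply, Matrix.one_apply, smul_eq_mul]
      by_cases h : i = j
      · subst h
        rw [hBij, if_pos rfl, mul_one, hsdef]
        have h1 := habs i
        have h2 := neg_abs_le (A i i)
        linarith
      · rw [hBij, if_neg h, mul_zero, add_zero]
        exact hM i j h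
    have hkey : specRad B < s := by
      have hmem := perron B hBnn
      have hmem2 : (((specRad B - s : ℝ)):ℂ) ∈ spectrum ℂ (mc A) := by
        rw [spectrum.mem_iff] at hmem ⊢
        intro hcon
        apply hmem
        have heq : algebraMap ℂ (Matrix (Fin n) (Fin n) ℂ) ((specRad B : ℝ):ℂ) - mc B
            = algebraMap ℂ _ (((specRad B - s : ℝ)):ℂ) - mc A := by
          rw [Algebra.algebraMap_eq_smul_one, Algebra.algebraMap_eq_smul_one]
          have hmcB : mc B = mc A + ((s:ℝ):ℂ) • 1 := by
            rw [hBdef]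
            ext i j
            simp only [Matrix.map_apply, Matrix.add_apply, Matrix.smul_apply, Matrix.one_apply,
              smul_eq_mul]
            push_cast
            split <;> simp
          rw [hmcB]
          push_cast
          rw [sub_smul]
          abel
        rw [heq]
        exact hcon
      have h3 : specRad B - s < 0 := by simpa using hH _ hmem2
      linarith
    obtain ⟨S, hSapp, hSnn, hSdiag, hSl, hSr⟩ := neumann B hBnn hkey
    have hsub : s • (1 : Matrix (Fin n) (Fin n) ℝ) - B = -A := by rw [hBdef]; abel
    rw [hsub] at hSl hSr
    refine ⟨S, ?_, ?_, hSnn, ?_⟩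
    · rw [Matrix.mul_neg, ← Matrix.neg_mul]; exact hSl
    · rw [Matrix.neg_mul, ← Matrix.mul_neg]; exact hSr
    · intro i
      have h1 : 1/s ≤ S i i := hSdiag i
      have h2 : S i i ≤ ∑ j, S i j :=
        Finset.single_le_sum (fun j _ => hSnn i j) (Finset.mem_univ i)
      have h3 : 0 < 1/s := by positivity
      linarith

lemma specRad_lt_one {q : ℕ} (G : Matrix (Fin q) (Fin q) ℝ) (hG : ∀ i j, 0 ≤ G i j)
    (d : Fin q → ℝ) (hd : ∀ i, 0 < d i) (h : ∀ i, G.mulVec d i < d i) : specRad G < 1 := by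
  rcases isEmpty_or_nonempty (Fin q) with hE | hNE
  · rw [specRad_of_isEmpty]; norm_num
  · set r := Finset.univ.sup' Finset.univ_nonempty (fun i => G.mulVec d i / d i) with hrdef
    have hrlt : r < 1 := by
      rw [hrdef, Finset.sup'_lt_iff]
      intro i _
      rw [div_lt_one (hd i)]
      exact h i
    have hGdnn : ∀ i, 0 ≤ G.mulVec d i := by
      intro i
      rw [mulVec_apply']
      exact Finset.sum_nonneg fun j _ => mul_nonneg (hG i j) (hd j).le
    have hrd : ∀ i, G.mulVec d i ≤ r * d i := by
      intro i
      have h1 : G.mulVec d i / d i ≤ r := Finset.le_sup' (fun i => G.mulVec d i / d i) (Finset.mem_univ i)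
      rw [div_le_iff₀ (hd i)] at h1
      linarith
    have hr0 : 0 ≤ r := by
      obtain ⟨i⟩ := hNE
      have h1 : G.mulVec d i / d i ≤ r := Finset.le_sup' (fun i => G.mulVec d i / d i) (Finset.mem_univ i)
      have h2 : 0 ≤ G.mulVec d i / d i := div_nonneg (hGdnn i) (hd i).le
      linarith
    have hbound : ∀ μ ∈ spectrum ℂ (mc G), ‖μ‖ ≤ r := by
      intro μ hμ
      have hdet : ¬IsUnit (algebraMap ℂ (Matrix (Fin q) (Fin q) ℂ) μ - mc G) :=
        spectrum.mem_iff.mp hμ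
      have hdet0 : (algebraMap ℂ (Matrix (Fin q) (Fin q) ℂ) μ - mc G).det = 0 := by
        by_contra hne
        exact hdet ((Matrix.isUnit_iff_isUnit_det _).mpr (Ne.isUnit hne))
      obtain ⟨v, hvne, hv⟩ := Matrix.exists_mulVec_eq_zero_iff.mpr hdet0
      have hvec : ∀ i, (mc G).mulVec v i = μ * v i := by
        intro i
        have h1 := congrFun hv i
        rw [Algebra.algebraMap_eq_smul_one, Matrix.sub_mulVec, Matrix.smul_mulVec,
          Matrix.one_mulVec] at h1
        have h2 : μ • v i - (mc G).mulVec v i = 0 := h1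
        rw [smul_eq_mul] at h2
        exact (sub_eq_zero.mp h2).symm
      obtain ⟨i, _, hieq⟩ := Finset.exists_mem_eq_sup' (Finset.univ_nonempty (α := Fin q))
        (fun j => ‖v j‖ / d j)
      set c := ‖v i‖ / d i with hcdef
      have hcmax : ∀ j, ‖v j‖ / d j ≤ c := by
        intro j
        rw [← hieq]
        exact Finset.le_sup' (fun j => ‖v j‖ / d j) (Finset.mem_univ j)
      have hcpos : 0 < c := by
        obtain ⟨j, hj⟩ := Function.ne_iff.mp hvne
        have h1 : 0 < ‖v j‖ / d j := div_pos (norm_pos_iff.mpr hj) (hd j)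
        exact lt_of_lt_of_le h1 (hcmax j)
      have hvle : ∀ j, ‖v j‖ ≤ c * d j := fun j => (div_le_iff₀ (hd j)).mp (hcmax j)
      have hvi : c * d i = ‖v i‖ := by
        rw [hcdef]
        exact div_mul_cancel₀ _ (ne_of_gt (hd i))
      have hkey : ‖μ‖ * ‖v i‖ ≤ r * ‖v i‖ := by
        calc ‖μ‖ * ‖v i‖ = ‖μ * v i‖ := (norm_mul _ _).symm
          _ = ‖(mc G).mulVec v i‖ := by rw [← hvec i]
          _ ≤ ∑ j, ‖(mc G) i j * v j‖ := by
              rw [cmulVec_apply']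
              exact norm_sum_le _ _
          _ = ∑ j, G i j * ‖v j‖ := by
              refine Finset.sum_congr rfl fun j _ => ?_
              rw [norm_mul, mc_apply, Complex.norm_real, Real.norm_eq_abs,
                abs_of_nonneg (hG i j)]
          _ ≤ ∑ j, G i j * (c * d j) :=
              Finset.sum_le_sum fun j _ => mul_le_mul_of_nonneg_left (hvle j) (hG i j)
          _ = c * G.mulVec d i := by
              rw [mulVec_apply', Finset.mul_sum]
              exact Finset.sum_congr rfl fun j _ => by ring
          _ ≤ c * (r * d i) := mul_le_mul_of_nonneg_left (hrd i) hcpos.le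
          _ = r * (c * d i) := by ring
          _ = r * ‖v i‖ := by rw [hvi]
      have hvipos : 0 < ‖v i‖ := by rw [← hvi]; exact mul_pos hcpos (hd i)
      exact le_of_mul_le_mul_right hkey hvipos
    have hrad : spectralRadius ℂ (mc G) ≤ ENNReal.ofReal r := by
      rw [spectralRadius]
      refine iSup₂_le fun k hk => ?_
      rw [← ENNReal.ofReal_coe_nnreal, coe_nnnorm]
      exact ENNReal.ofReal_le_ofReal (hbound k hk)
    have h5 := ENNReal.toReal_mono ENNReal.ofReal_ne_top hrad
    rw [ENNReal.toReal_ofReal hr0] at h5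
    calc specRad G ≤ r := h5
      _ < 1 := hrlt

end SGHelpers

theorem stmt17 {n q : ℕ} (A₀ : Matrix (Fin n) (Fin n) ℝ)
    (E : Matrix (Fin n) (Fin q) ℝ) (C : Matrix (Fin q) (Fin n) ℝ)
    (F : Matrix (Fin q) (Fin q) ℝ)
    (hA₀ : IsMetzler A₀) (hA₀s : IsHurwitz A₀)
    (hE : ∀ i j, 0 ≤ E i j) (hC : ∀ i j, 0 ≤ C i j) (hF : ∀ i j, 0 ≤ F i j) :
    (∃ (lam : Fin n → ℝ) (d : Fin q → ℝ), (∀ i, 0 < lam i) ∧ (∀ i, 0 < d i) ∧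
        (∀ i, A₀.mulVec lam i + E.mulVec d i < 0) ∧
        (∀ i, C.mulVec lam i + (F - 1).mulVec d i < 0)) ↔
      specRad (-(C * A₀⁻¹ * E) + F) < 1 := by
  obtain ⟨S, hAS, hSA, hSnn, hSpos⟩ := metzler_inv A₀ hA₀ hA₀s
  have hInv : A₀⁻¹ = -S := Matrix.inv_eq_right_inv hAS
  have hGeq : -(C * A₀⁻¹ * E) + F = C * S * E + F := by
    rw [hInv, Matrix.mul_neg, Matrix.neg_mul, neg_neg]
  rw [hGeq]
  set G := C * S * E + F with hGdef
  have hA₀S : A₀ * S = -1 := by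
    have h := hAS
    rw [Matrix.mul_neg] at h
    exact neg_eq_iff_eq_neg.mp h
  have hGnn : ∀ i j, 0 ≤ G i j := by
    intro i j
    rw [hGdef, Matrix.add_apply]
    refine add_nonneg ?_ (hF i j)
    rw [Matrix.mul_apply]
    refine Finset.sum_nonneg fun l _ => mul_nonneg ?_ (hE l j)
    rw [Matrix.mul_apply]
    exact Finset.sum_nonneg fun p _ => mul_nonneg (hC i p) (hSnn p l)
  constructor
  · rintro ⟨lam, d, hlam, hd, h1, h2⟩
    apply specRad_lt_one G hGnn d hd
    intro i
    set u := E.mulVec d with hudef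
    have hulam : ∀ j, S.mulVec u j < lam j := by
      intro j
      haveI : Nonempty (Fin n) := ⟨j⟩
      set v : Fin n → ℝ := fun l => A₀.mulVec lam l + u l with hvdef
      have hvneg : ∀ l, v l < 0 := fun l => h1 l
      have hSvlt : (∑ l, S j l * v l) < 0 := by
        set cm := Finset.univ.sup' Finset.univ_nonempty v with hcm
        have hcmneg : cm < 0 := by
          rw [hcm, Finset.sup'_lt_iff]
          exact fun l _ => hvneg l
        calc ∑ l, S j l * v l ≤ ∑ l, S j l * cm :=
              Finset.sum_le_sum fun l _ =>
                mul_le_mul_of_nonneg_left (Finset.le_sup' v (Finset.mem_univ l)) (hSnn j l)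
          _ = (∑ l, S j l) * cm := by rw [Finset.sum_mul]
          _ < 0 := mul_neg_of_pos_of_neg (hSpos j) hcmneg
      have hexp : (∑ l, S j l * v l) = -lam j + S.mulVec u j := by
        calc (∑ l, S j l * v l) = S.mulVec (A₀.mulVec lam + u) j := rfl
          _ = S.mulVec (A₀.mulVec lam) j + S.mulVec u j := by
              rw [Matrix.mulVec_add]
              simp
          _ = -lam j + S.mulVec u j := by
              rw [Matrix.mulVec_mulVec]
              have hSA₀ : S * A₀ = -1 := by
                have h := hSA
                rw [Matrix.neg_mul] at h
                exact neg_eq_iff_eq_neg.mp h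
              rw [hSA₀, Matrix.neg_mulVec, Matrix.one_mulVec]
              simp
      rw [hexp] at hSvlt
      linarith
    have hCSle : (C * S * E).mulVec d i ≤ C.mulVec lam i := by
      have heq : (C * S * E).mulVec d i = C.mulVec (S.mulVec u) i := by
        rw [hudef, Matrix.mulVec_mulVec, Matrix.mulVec_mulVec]
      rw [heq, mulVec_apply', mulVec_apply']
      exact Finset.sum_le_sum fun j _ => mul_le_mul_of_nonneg_left (hulam j).le (hC i j)
    have h2i := h2 i
    have hFd : (F - 1).mulVec d i = F.mulVec d i - d i := by
      rw [Matrix.sub_mulVec]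
      simp [Matrix.one_mulVec]
    have hGdi : G.mulVec d i = (C * S * E).mulVec d i + F.mulVec d i := by
      rw [hGdef, Matrix.add_mulVec]
      simp
    rw [hFd] at h2i
    rw [hGdi]
    linarith
  · intro hspec
    obtain ⟨SG, hSGapp, hSGnn, hSGdiag, hSGl, hSGr⟩ := neumann G hGnn hspec
    set d := SG.mulVec (fun _ => (1:ℝ)) with hddef
    have hdSG : ∀ i, d i = ∑ j, SG i j := by
      intro i
      rw [hddef, mulVec_apply']
      simp
    have hd : ∀ i, 0 < d i := by
      intro i
      have h1 := hSGdiag i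
      norm_num at h1
      have h3 : SG i i ≤ ∑ j, SG i j :=
        Finset.single_le_sum (f := fun j => SG i j) (fun j _ => hSGnn i j) (Finset.mem_univ i)
      rw [hdSG i]
      linarith
    have hGS : G * SG = SG - 1 := by
      have h4 := hSGl
      rw [one_smul, Matrix.sub_mul, Matrix.one_mul] at h4
      rw [← h4]
      abel
    have hGd : ∀ i, G.mulVec d i = d i - 1 := by
      intro i
      rw [hddef, Matrix.mulVec_mulVec, hGS, Matrix.sub_mulVec, Matrix.one_mulVec]
      simp
    set u := E.mulVec d with hudef
    have hun : ∀ i, 0 ≤ u i := fun i => by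
      rw [hudef, mulVec_apply']
      exact Finset.sum_nonneg fun j _ => mul_nonneg (hE i j) (hd j).le
    set w := S.mulVec (fun _ => (1:ℝ)) with hwdef
    have hw : ∀ i, 0 < w i := by
      intro i
      rw [hwdef, mulVec_apply']
      simpa using hSpos i
    have hAw : ∀ i, A₀.mulVec w i = -1 := by
      intro i
      rw [hwdef, Matrix.mulVec_mulVec, hA₀S, Matrix.neg_mulVec, Matrix.one_mulVec]
      simp
    set lam0 := S.mulVec u with hlam0def
    have hlam0 : ∀ i, 0 ≤ lam0 i := fun i => by
      rw [hlam0def, mulVec_apply']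
      exact Finset.sum_nonneg fun j _ => mul_nonneg (hSnn i j) (hun j)
    have hAlam0 : ∀ i, A₀.mulVec lam0 i = -u i := by
      intro i
      rw [hlam0def, Matrix.mulVec_mulVec, hA₀S, Matrix.neg_mulVec, Matrix.one_mulVec]
      simp
    set P := C.mulVec w with hPdef
    have hPnn : ∀ i, 0 ≤ P i := fun i => by
      rw [hPdef, mulVec_apply']
      exact Finset.sum_nonneg fun j _ => mul_nonneg (hC i j) (hw j).le
    have hPsum : (0:ℝ) ≤ ∑ i, P i := Finset.sum_nonneg fun i _ => hPnn i
    set ε := 1 / (1 + ∑ i, P i) with hεdef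
    have hεpos : 0 < ε := by rw [hεdef]; positivity
    have hεP : ∀ i, ε * P i < 1 := by
      intro i
      have hle : P i ≤ ∑ j, P j :=
        Finset.single_le_sum (f := fun j => P j) (fun j _ => hPnn j) (Finset.mem_univ i)
      rw [hεdef, div_mul_eq_mul_div, div_lt_one (by positivity)]
      linarith
    refine ⟨lam0 + ε • w, d, ?_, hd, ?_, ?_⟩
    · intro i
      show 0 < lam0 i + ε * w i
      exact add_pos_of_nonneg_of_pos (hlam0 i) (mul_pos hεpos (hw i))
    · intro i
      have hlin : A₀.mulVec (lam0 + ε • w) i = A₀.mulVec lam0 i + ε * A₀.mulVec w i := by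
        rw [Matrix.mulVec_add, Matrix.mulVec_smul]
        simp
      rw [hlin, hAlam0 i, hAw i, ← hudef]
      linarith [hεpos]
    · intro i
      have hlin : C.mulVec (lam0 + ε • w) i = C.mulVec lam0 i + ε * P i := by
        rw [Matrix.mulVec_add, Matrix.mulVec_smul, hPdef]
        simp
      have hClam0 : C.mulVec lam0 i = (C * S * E).mulVec d i := by
        rw [hlam0def, hudef, Matrix.mulVec_mulVec, Matrix.mulVec_mulVec]
      have hFd : (F - 1).mulVec d i = F.mulVec d i - d i := by
        rw [Matrix.sub_mulVec]
        simp [Matrix.one_mulVec]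
      have hGdi : (C * S * E).mulVec d i + F.mulVec d i = G.mulVec d i := by
        rw [hGdef, Matrix.add_mulVec]
        simp
      rw [hlin, hClam0, hFd]
      have h5 := hGd i
      have h6 := hεP i
      linarith [hGdi]
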